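/- Let R be an integrally closed Noetherian domain, p₁,…,pₙ distinct height-one primes of R, J = p₁ ∩ ⋯ ∩ pₙ, and U = R ∖ (p₁ ∪ ⋯ ∪ pₙ). Then for every positive integer k, J^k R_U ∩ R = p₁^{(k)} ∩ ⋯ ∩ pₙ^{(k)}, where p^{(k)} = p^k R_p ∩ R denotes the k-th symbolic power. -/

import Mathlib

/-- A height-one prime ideal: a nonzero prime whose only strictly smaller prime is ⊥. -/
def IsHeightOnePrime {R : Type*} [CommRing R] (p : Ideal R) : Prop :=
  p.IsPrime ∧ p ≠ ⊥ ∧ ∀ q : Ideal R, q.IsPrime → q < p → q = ⊥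

/-- The m-th symbolic power `p^{(m)} = p^m R_p ∩ R` of a prime ideal `p`,
described elementwise. -/
def symbolicPower {R : Type*} [CommRing R] (p : Ideal R) (m : ℕ) : Set R :=
  {x | ∃ s, s ∉ p ∧ s * x ∈ p ^ m}

/-!
Localizing at `U` makes the `pᵢ` the only maximal ideals: by prime avoidance every prime
disjoint from `U` lies in some `pⱼ`, and distinct height-one primes are incomparable. In the
semilocal ring `R_U` the powers `(pᵢR_U)^k` are then primary and pairwise comaximal, so
`⋂ (pᵢR_U)^k = ∏ (pᵢR_U)^k ⊆ J^k R_U`, and contracting `(pᵢR_U)^k` back to `R` gives `pᵢ^{(k)}`.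
-/

theorem IsHeightOnePrime.eq_of_le {R : Type*} [CommRing R] {p q : Ideal R}
    (hp : IsHeightOnePrime p) (hq : IsHeightOnePrime q) (hpq : p ≤ q) : p = q := by
  by_contra hne
  exact hp.2.1 (hq.2.2 p hp.1 (lt_of_le_of_ne hpq hne))

namespace Ideal

theorem IsMaximal.mem_pow_of_mul_mem {R : Type*} [CommSemiring R] {M : Ideal R}
    (hM : M.IsMaximal) {s y : R} (hs : s ∉ M) {k : ℕ} (h : s * y ∈ M ^ k) : y ∈ M ^ k := by
  cases k with
  | zero => simp
  | succ k =>
    have hrad : radical (M ^ (k + 1)) = M := by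
      rw [radical_pow _ k.succ_ne_zero, hM.isPrime.radical]
    have hprimary := isPrimary_of_isMaximal_radical (hrad ▸ hM)
    rw [mul_comm] at h
    exact ((isPrimary_iff.mp hprimary).2 h).resolve_right (by rwa [hrad])

theorem iInf_pow_eq_prod_pow_of_isMaximal {S ι : Type*} [CommSemiring S] [Fintype ι]
    {P : ι → Ideal S} (hP : ∀ i, (P i).IsMaximal) (hinj : Function.Injective P) (k : ℕ) :
    ⨅ i, P i ^ k = (∏ i, P i) ^ k := by
  rw [← Finset.prod_pow, prod_eq_iInf_of_pairwise_isCoprime]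
  · simp
  · intro i _ j _ hij
    exact (isCoprime_iff_sup_eq.mpr ((hP i).coprime_of_ne (hP j) (hinj.ne hij))).pow

end Ideal

section SemilocalLocalization

open Ideal

variable {R ι : Type*} [CommRing R] {p : ι → Ideal R} [∀ i, (p i).IsPrime]

theorem disjoint_iInf_primeCompl (i : ι) :
    Disjoint ((⨅ j, (p j).primeCompl : Submonoid R) : Set R) (p i) :=
  Set.disjoint_left.mpr fun _ hx hxp => Submonoid.mem_iInf.mp hx i hxp

theorem exists_le_of_disjoint_iInf_primeCompl [Finite ι] {I : Ideal R}
    (hI : Disjoint ((⨅ j, (p j).primeCompl : Submonoid R) : Set R) I) : ∃ i, I ≤ p i := by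
  have : Fintype ι := Fintype.ofFinite ι
  have hsub : (I : Set R) ⊆ ⋃ i ∈ (Finset.univ : Finset ι), (p i : Set R) := by
    intro x hx
    by_contra hxU
    refine Set.disjoint_left.mp hI (Submonoid.mem_iInf.mpr fun i hxp => hxU ?_) hx
    exact Set.mem_biUnion (Finset.mem_coe.mpr (Finset.mem_univ i)) hxp
  cases isEmpty_or_nonempty ι with
  | inl _ => simpa using hsub I.zero_mem
  | inr hι =>
    obtain ⟨a⟩ := hι
    simpa using (subset_union_prime a a fun i _ _ _ => inferInstance).mp hsub

variable {S : Type*} [CommRing S] [Algebra R S] [IsLocalization (⨅ j, (p j).primeCompl) S]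

theorem under_map_algebraMap_of_iInf_primeCompl (i : ι) :
    (map (algebraMap R S) (p i)).under R = p i :=
  IsLocalization.under_map_of_isPrime_disjoint _ S inferInstance (disjoint_iInf_primeCompl i)

theorem isMaximal_map_of_forall_le_eq [Finite ι] (i : ι) (h : ∀ j, p i ≤ p j → p i = p j) :
    (map (algebraMap R S) (p i)).IsMaximal := by
  set U : Submonoid R := ⨅ j, (p j).primeCompl
  have hP : (map (algebraMap R S) (p i)).IsPrime :=
    IsLocalization.isPrime_of_isPrime_disjoint U S (p i) inferInstance
      (disjoint_iInf_primeCompl i)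
  obtain ⟨M, hM, hPM⟩ := exists_le_maximal _ hP.ne_top
  obtain ⟨j, hj⟩ := exists_le_of_disjoint_iInf_primeCompl
    ((IsLocalization.isPrime_iff_isPrime_disjoint U S M).mp hM.isPrime).2
  have hi : p i ≤ M.under R :=
    under_map_algebraMap_of_iInf_primeCompl (p := p) (S := S) i ▸ comap_mono hPM
  have hunder : M.under R = p i := le_antisymm (h j (hi.trans hj) ▸ hj) hi
  rwa [← IsLocalization.map_under U S M, hunder] at hM

theorem map_iInf_pow_eq_iInf_map_pow [Fintype ι]
    (hmax : ∀ i, (map (algebraMap R S) (p i)).IsMaximal) (hinj : Function.Injective p) (k : ℕ) :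
    map (algebraMap R S) ((⨅ i, p i) ^ k) = ⨅ i, map (algebraMap R S) (p i) ^ k := by
  refine le_antisymm (le_iInf fun i => ?_) ?_
  · rw [← Ideal.map_pow]
    exact map_mono (pow_right_mono (iInf_le _ i) k)
  · have hinjP : Function.Injective fun i => map (algebraMap R S) (p i) := fun i j hij =>
      hinj (by simpa only [under_map_algebraMap_of_iInf_primeCompl] using
        congrArg (under R) hij)
    have hmap_prod : map (algebraMap R S) (∏ i, p i) = ∏ i, map (algebraMap R S) (p i) :=
      map_prod (mapHom (algebraMap R S)) p Finset.univ
    rw [iInf_pow_eq_prod_pow_of_isMaximal hmax hinjP, ← hmap_prod, ← Ideal.map_pow]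
    refine map_mono (pow_right_mono ?_ k)
    simpa [Finset.inf_eq_iInf] using prod_le_inf (s := Finset.univ) (f := p)

theorem algebraMap_mem_map_pow_iff_mem_symbolicPower {i : ι}
    (hmax : (map (algebraMap R S) (p i)).IsMaximal) (k : ℕ) (x : R) :
    algebraMap R S x ∈ map (algebraMap R S) (p i ^ k) ↔ x ∈ symbolicPower (p i) k := by
  constructor
  · rw [IsLocalization.algebraMap_mem_map_algebraMap_iff (⨅ j, (p j).primeCompl)]
    rintro ⟨m, hm, hmx⟩
    exact ⟨m, Submonoid.mem_iInf.mp hm i, hmx⟩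
  · rintro ⟨s, hs, hsx⟩
    have hsP : algebraMap R S s ∉ map (algebraMap R S) (p i) := fun h =>
      hs (under_map_algebraMap_of_iInf_primeCompl (p := p) (S := S) i ▸ mem_comap.mpr h)
    rw [Ideal.map_pow]
    refine hmax.mem_pow_of_mul_mem hsP ?_
    rw [← map_mul, ← Ideal.map_pow]
    exact mem_map_of_mem _ hsx

end SemilocalLocalization

theorem stmt13_general {R : Type*} [CommRing R]
    {n : ℕ} (p : Fin n → Ideal R) (hpinj : Function.Injective p)
    (hp1 : ∀ i, IsHeightOnePrime (p i)) (hp : ∀ i, (p i).IsPrime)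
    (J : Ideal R) (hJ : J = ⨅ i, p i)
    (U : Submonoid R) (hU : U = ⨅ i, @Ideal.primeCompl R _ (p i) (hp i))
    (k : ℕ) :
    (Ideal.comap (algebraMap R (Localization U))
        (Ideal.map (algebraMap R (Localization U)) (J ^ k)) : Set R) =
      ⋂ i, symbolicPower (p i) k := by
  subst hJ hU
  have := hp
  have hmax (i : Fin n) :
      (Ideal.map (algebraMap R (Localization (⨅ j, (p j).primeCompl))) (p i)).IsMaximal :=
    isMaximal_map_of_forall_le_eq i fun j hij => (hp1 i).eq_of_le (hp1 j) hij
  ext x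
  simp only [SetLike.mem_coe, Ideal.mem_comap, Set.mem_iInter,
    map_iInf_pow_eq_iInf_map_pow hmax hpinj, Ideal.mem_iInf, ← Ideal.map_pow,
    algebraMap_mem_map_pow_iff_mem_symbolicPower (hmax _)]

/-- Let R be an integrally closed Noetherian domain, p₁,…,pₙ distinct
height-one primes, J = p₁ ∩ ⋯ ∩ pₙ, and U = R ∖ (p₁ ∪ ⋯ ∪ pₙ). Then for every k ≥ 1,
J^k R_U ∩ R = p₁^{(k)} ∩ ⋯ ∩ pₙ^{(k)}. -/
theorem stmt13 {R : Type*} [CommRing R] [IsDomain R] [IsIntegrallyClosed R]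
    [IsNoetherianRing R]
    {n : ℕ} (p : Fin n → Ideal R) (hpinj : Function.Injective p)
    (hp1 : ∀ i, IsHeightOnePrime (p i)) (hp : ∀ i, (p i).IsPrime)
    (J : Ideal R) (hJ : J = ⨅ i, p i)
    (U : Submonoid R) (hU : U = ⨅ i, @Ideal.primeCompl R _ (p i) (hp i))
    (k : ℕ) (hk : 0 < k) :
    (Ideal.comap (algebraMap R (Localization U))
        (Ideal.map (algebraMap R (Localization U)) (J ^ k)) : Set R) =
      ⋂ i, symbolicPower (p i) k :=
  stmt13_general p hpinj hp1 hp J hJ U hU k
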